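/- arXiv:1511.04409 — 7 statements merged into one kernel-verified Lean document; each statement's English description precedes it below -/
import Mathlib

section
/- For every positive integer k and m ≡ 0 (mod 8), define the (k−1) × m array A with entries a_{i,j} given (reading rows bottom to top) by a_{i,j} = i + (j−1)k for row i ∈ {1,...,k−1} and column j ∈ {1,...,m}. Then for each row i: the sum of entries in columns j with j ≡ 0 or 1 (mod 4) equals the sum of entries in columns j with j ≡ 2 or 3 (mod 4), and the row entries are strictly increasing in j; moreover the entries of A are exactly the elements of {1, 2, ..., mk} \ {k, 2k, ..., mk}. -/
/-!
Each row is an arithmetic progression, so on every block of four consecutive columns the outer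
pair of entries has the same sum as the inner pair; as `4 ∣ m`, the columns split into such blocks.
The entries are exactly the non-multiples of `k` by division with remainder.
-/

open Finset

theorem sum_Icc_filter_mod_four_outer_eq_inner {M : Type*} [AddCommMonoid M] (f : ℕ → M)
    (hf : ∀ t, f (4 * t + 1) + f (4 * t + 4) = f (4 * t + 2) + f (4 * t + 3)) (n : ℕ) :
    ∑ j ∈ (Icc 1 (4 * n)).filter (fun j => j % 4 = 0 ∨ j % 4 = 1), f j =
      ∑ j ∈ (Icc 1 (4 * n)).filter (fun j => j % 4 = 2 ∨ j % 4 = 3), f j := by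
  induction n with
  | zero => simp
  | succ n ih =>
    rw [sum_filter, sum_filter] at ih ⊢
    rw [show 4 * (n + 1) = 4 * n + 3 + 1 by ring]
    simp only [sum_Icc_succ_top (le_add_left le_rfl), ih]
    norm_num [Nat.add_mod, add_assoc, hf]

theorem add_sub_one_mul_lt_add_sub_one_mul {i j j' k : ℕ} (hk : 0 < k) (hj : 1 ≤ j)
    (hjj' : j < j') : i + (j - 1) * k < i + (j' - 1) * k :=
  Nat.add_lt_add_left (Nat.mul_lt_mul_of_pos_right (by omega) hk) i

/-- Division with remainder: `x = i + (j - 1) k` with `i = x % k` and `j = x / k + 1`. -/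
theorem biUnion_image_add_sub_one_mul (k m : ℕ) :
    (Icc 1 (k - 1)).biUnion (fun i => (Icc 1 m).image (fun j => i + (j - 1) * k)) =
      (Icc 1 (m * k)).filter (fun x => ¬ k ∣ x) := by
  ext x
  simp only [mem_biUnion, mem_image, mem_filter, mem_Icc]
  constructor
  · rintro ⟨i, ⟨hi1, hik⟩, j, ⟨hj1, hjm⟩, rfl⟩
    have hrow : (j - 1) * k + k ≤ m * k := by
      rw [← Nat.succ_mul]; exact Nat.mul_le_mul_right k (by omega)
    have hmod : (i + (j - 1) * k) % k = i := by
      rw [Nat.add_mul_mod_self_right, Nat.mod_eq_of_lt (by omega)]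
    refine ⟨⟨by omega, by omega⟩, fun hdvd => ?_⟩
    rw [Nat.dvd_iff_mod_eq_zero, hmod] at hdvd
    omega
  · rintro ⟨⟨hx1, hxm⟩, hdvd⟩
    have hk : 0 < k := Nat.pos_of_ne_zero fun hk => by simp [hk] at hxm; omega
    have hmod : x % k ≠ 0 := fun h => hdvd (Nat.dvd_of_mod_eq_zero h)
    have hxlt : x < m * k := lt_of_le_of_ne hxm fun h => hdvd (h ▸ dvd_mul_left k m)
    have hlt : x % k < k := Nat.mod_lt x hk
    refine ⟨x % k, ⟨by omega, by omega⟩, x / k + 1,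
      ⟨Nat.le_add_left 1 _, (Nat.div_lt_iff_lt_mul hk).mpr hxlt⟩, ?_⟩
    rw [Nat.add_sub_cancel, Nat.mod_add_div']

theorem stmt4_general (k m : ℕ) (h8 : m % 8 = 0)
    (a : ℕ → ℕ → ℕ) (ha : ∀ i j, a i j = i + (j - 1) * k) :
    (∀ i, 1 ≤ i → i ≤ k - 1 →
      (∑ j ∈ (Finset.Icc 1 m).filter (fun j => j % 4 = 0 ∨ j % 4 = 1), a i j =
        ∑ j ∈ (Finset.Icc 1 m).filter (fun j => j % 4 = 2 ∨ j % 4 = 3), a i j) ∧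
      (∀ j j', 1 ≤ j → j < j' → j' ≤ m → a i j < a i j')) ∧
    (Finset.Icc 1 (k - 1)).biUnion (fun i => (Finset.Icc 1 m).image (fun j => a i j)) =
      (Finset.Icc 1 (m * k)).filter (fun x => ¬ k ∣ x) := by
  obtain rfl : a = fun i j => i + (j - 1) * k := funext fun i => funext (ha i)
  refine ⟨fun i hi hik => ⟨?_, fun j j' hj hjj' _ => ?_⟩, biUnion_image_add_sub_one_mul k m⟩
  · obtain ⟨n, rfl⟩ : 4 ∣ m := Nat.dvd_of_mod_eq_zero (by omega)
    refine sum_Icc_filter_mod_four_outer_eq_inner _ (fun t => ?_) n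
    simp only [Nat.add_sub_cancel, Nat.add_succ_sub_one]
    ring
  · exact add_sub_one_mul_lt_add_sub_one_mul (by omega) hj hjj'

/-- For `k ≥ 2` and `m ≡ 0 (mod 8)`, the `(k-1) × m` array `a_{i,j} = i + (j-1)k`
has balanced column-sums in each row (columns `j ≡ 0,1 (mod 4)` versus `j ≡ 2,3 (mod 4)`),
strictly increasing rows, and its entries are exactly `{1, …, mk} \ {k, 2k, …, mk}`. -/
theorem stmt4 (k m : ℕ) (hk : 2 ≤ k) (hm : 0 < m) (h8 : m % 8 = 0)
    (a : ℕ → ℕ → ℕ) (ha : ∀ i j, a i j = i + (j - 1) * k) :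
    (∀ i, 1 ≤ i → i ≤ k - 1 →
      (∑ j ∈ (Finset.Icc 1 m).filter (fun j => j % 4 = 0 ∨ j % 4 = 1), a i j =
        ∑ j ∈ (Finset.Icc 1 m).filter (fun j => j % 4 = 2 ∨ j % 4 = 3), a i j) ∧
      (∀ j j', 1 ≤ j → j < j' → j' ≤ m → a i j < a i j')) ∧
    (Finset.Icc 1 (k - 1)).biUnion (fun i => (Finset.Icc 1 m).image (fun j => a i j)) =
      (Finset.Icc 1 (m * k)).filter (fun x => ¬ k ∣ x) :=
  stmt4_general k m h8 a ha
end

section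
/- For m = 8r with r ≥ 5 odd, the sequence of differences 3, 6, 10, 14, ..., 8r−6, 8r−2, 4r, 4, 1, 8, 12, 16, ..., 4r−4, 4r+8, 4r+12, ..., 8r−8, 8r−4, 4r+4 is a list of 4r values whose absolute values are pairwise distinct, whose total sum equals 8r ( = m), and all of whose partial sums are pairwise distinct modulo 16r. -/
/-!
Read the differences as the steps of a walk on `ℤ` starting at `0`. Its vertices have an explicit
closed form: the walk zigzags through `-3, 3, -7, 7, …, -(4r-1), 4r-1`, jumps to `8r-1, 8r-5, 8r-4`,
then zigzags outwards through `8r+4, 8r-8, 8r+8, …, 12r-8, 4r-4` and stops at `8r`. These vertices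
are pairwise distinct integers in the open interval `(-4r, 12r)` of length `16r`, so they are
pairwise distinct modulo `16r`; distinctness of the step lengths is read off their closed form.
-/

open Finset

theorem Int.ModEq.eq_of_abs_sub_lt {n a b : ℤ} (h : a ≡ b [ZMOD n]) (hlt : |b - a| < n) :
    a = b :=
  (sub_eq_zero.mp (Int.eq_zero_of_abs_lt_dvd h.dvd hlt)).symm

-- Verbatim the right-hand side of the hypothesis `hd` of `stmt6`.
def halfPathStep (r i : ℕ) : ℤ :=
  if i = 0 then -3
  else if i < 2 * r then (-1) ^ (i + 1) * ((4 * i + 2 : ℕ) : ℤ)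
  else if i = 2 * r then ((4 * r : ℕ) : ℤ)
  else if i = 2 * r + 1 then -4
  else if i = 2 * r + 2 then 1
  else if i = 4 * r - 1 then ((4 * r + 4 : ℕ) : ℤ)
  else (-1) ^ (i - (2 * r + 3)) *
    (if i - (2 * r + 3) ≤ r - 3 then ((4 * (i - (2 * r + 3)) + 8 : ℕ) : ℤ)
     else ((4 * (i - (2 * r + 3)) + 16 : ℕ) : ℤ))

def halfPathLength (r i : ℕ) : ℤ :=
  if i = 0 then 3
  else if i < 2 * r then 4 * i + 2
  else if i = 2 * r then 4 * r
  else if i = 2 * r + 1 then 4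
  else if i = 2 * r + 2 then 1
  else if i = 4 * r - 1 then 4 * r + 4
  else if i ≤ 3 * r then 4 * i - 8 * r - 4
  else 4 * i - 8 * r + 4

def halfPathVertex (r a : ℕ) : ℤ :=
  if a = 0 then 0
  else if a ≤ 2 * r then (if a % 2 = 1 then -(2 * a + 1) else 2 * a - 1)
  else if a = 2 * r + 1 then 8 * r - 1
  else if a = 2 * r + 2 then 8 * r - 5
  else if a = 4 * r then 8 * r
  else if a % 2 = 0 then 2 * a + 4 * r - 4
  else if a ≤ 3 * r then 12 * r + 2 - 2 * a
  else 12 * r - 6 - 2 * a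

section

variable {r : ℕ}

theorem halfPathStep_eq_vertex_sub (hr : 5 ≤ r) (hodd : Odd r) {i : ℕ} (hi : i < 4 * r) :
    halfPathStep r i = halfPathVertex r (i + 1) - halfPathVertex r i := by
  have hr2 : r % 2 = 1 := Nat.odd_iff.mp hodd
  simp only [halfPathStep, halfPathVertex, neg_one_pow_eq_ite, Nat.even_iff, ite_mul, one_mul,
    neg_one_mul]
  omega

theorem natAbs_halfPathStep {i : ℕ} (hi : i < 4 * r) :
    ((halfPathStep r i).natAbs : ℤ) = halfPathLength r i := by
  simp only [halfPathStep, halfPathLength, neg_one_pow_eq_ite, Nat.even_iff, ite_mul, one_mul,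
    neg_one_mul]
  omega

theorem halfPathLength_injOn (hr : 1 < r) : Set.InjOn (halfPathLength r) (Set.Iio (4 * r)) := by
  intro i hi j hj
  simp only [Set.mem_Iio] at hi hj
  simp only [halfPathLength]
  omega

theorem halfPathVertex_zero : halfPathVertex r 0 = 0 := rfl

theorem halfPathVertex_four_mul (hr : 1 < r) : halfPathVertex r (4 * r) = 8 * r := by
  simp only [halfPathVertex, ↓reduceIte]
  omega

theorem halfPathVertex_injOn (hr : 1 < r) : Set.InjOn (halfPathVertex r) (Set.Iic (4 * r)) := by
  intro a ha b hb
  simp only [Set.mem_Iic] at ha hb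
  simp only [halfPathVertex]
  omega

theorem halfPathVertex_mem_Ioo (hr : 0 < r) {a : ℕ} (ha : a ≤ 4 * r) :
    halfPathVertex r a ∈ Set.Ioo (-(4 * r : ℤ)) (12 * r) := by
  simp only [halfPathVertex, Set.mem_Ioo]
  omega

theorem sum_range_halfPathStep (hr : 5 ≤ r) (hodd : Odd r) {a : ℕ} (ha : a ≤ 4 * r) :
    ∑ i ∈ range a, halfPathStep r i = halfPathVertex r a := by
  rw [sum_congr rfl fun i hi =>
      halfPathStep_eq_vertex_sub hr hodd ((mem_range.mp hi).trans_le ha),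
    sum_range_sub, halfPathVertex_zero, sub_zero]

end

/-- For `m = 8r` with `r ≥ 5` odd, the signed difference sequence along the half-path `P`
of Lemma 3.1 (with unsigned lengths `3, 6, 10, …, 8r-2, 4r, 4, 1, 8, 12, …, 4r-4,
4r+8, …, 8r-4, 4r+4`) consists of `4r` values with pairwise distinct absolute values,
total sum `8r = m`, and pairwise distinct partial sums modulo `16r`. -/
theorem stmt6 (r : ℕ) (hr : 5 ≤ r) (hodd : Odd r) (d : ℕ → ℤ)
    (hd : ∀ i : ℕ, i < 4 * r → d i =
      if i = 0 then -3
      else if i < 2 * r then (-1) ^ (i + 1) * ((4 * i + 2 : ℕ) : ℤ)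
      else if i = 2 * r then ((4 * r : ℕ) : ℤ)
      else if i = 2 * r + 1 then -4
      else if i = 2 * r + 2 then 1
      else if i = 4 * r - 1 then ((4 * r + 4 : ℕ) : ℤ)
      else (-1) ^ (i - (2 * r + 3)) *
        (if i - (2 * r + 3) ≤ r - 3 then ((4 * (i - (2 * r + 3)) + 8 : ℕ) : ℤ)
         else ((4 * (i - (2 * r + 3)) + 16 : ℕ) : ℤ))) :
    (∀ i j, i < j → j < 4 * r → (d i).natAbs ≠ (d j).natAbs) ∧
    (∑ i ∈ Finset.range (4 * r), d i = (8 * r : ℕ)) ∧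
    (∀ a b, a < b → b ≤ 4 * r →
      ¬ Int.ModEq ((16 * r : ℕ) : ℤ)
        (∑ i ∈ Finset.range a, d i) (∑ i ∈ Finset.range b, d i)) := by
  have hr1 : 1 < r := by omega
  have hstep : ∀ i < 4 * r, d i = halfPathStep r i := hd
  have hsum : ∀ a ≤ 4 * r, ∑ i ∈ range a, d i = halfPathVertex r a := fun a ha => by
    rw [← sum_range_halfPathStep hr hodd ha]
    exact sum_congr rfl fun i hi => hstep i ((mem_range.mp hi).trans_le ha)
  refine ⟨fun i j hij hj => ?_, ?_, fun a b hab hb hmod => ?_⟩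
  · have hi : i < 4 * r := hij.trans hj
    rw [hstep i hi, hstep j hj, ← Int.natCast_inj.ne, natAbs_halfPathStep hi,
      natAbs_halfPathStep hj]
    exact (halfPathLength_injOn hr1).ne hi hj hij.ne
  · rw [hsum _ le_rfl, halfPathVertex_four_mul hr1]
    push_cast
    ring
  · have ha : a ≤ 4 * r := hab.le.trans hb
    rw [hsum a ha, hsum b hb] at hmod
    obtain ⟨hlo_a, hhi_a⟩ := halfPathVertex_mem_Ioo (by omega) ha
    obtain ⟨hlo_b, hhi_b⟩ := halfPathVertex_mem_Ioo (by omega) hb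
    refine (halfPathVertex_injOn hr1).ne ha hb hab.ne (hmod.eq_of_abs_sub_lt ?_)
    rw [abs_sub_lt_iff]
    push_cast
    constructor <;> linarith
end

section
/- Let t = 4s+3 with s ≥ 0 an integer, m = 6, and n = 6t. The 2s × 6 array with rows (4i−3, 4i−2, 4i−1, 4i, 8s+2i+3, 8s+2i+5) suitably adjusted as in the construction (row i for 1 ≤ i ≤ 2s has entries a_{i,1} < ... < a_{i,6} where columns 1–4 run through {1,...,4s−2, 4s+3,...,8s+4} in consecutive blocks of 4 and columns 5–6 through {8s+5,...,12s+4} avoiding {10s+2,10s+3}\{α, α+2}) satisfies, for every row i, a_{i,2} + a_{i,4} + a_{i,5} = a_{i,1} + a_{i,3} + a_{i,6}. -/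
/-!
In each row, columns 2 and 4 exceed columns 1 and 3 by exactly one: the first four columns
enumerate `ℕ` with the gap `{4s-1, …, 4s+2}` removed, and since that gap starts right after the
even number `4s-2` it never separates a pair `4k+1, 4k+2` or `4k+3, 4k+4`. Column 6 exceeds
column 5 by two, so both sides of the balance identity agree.
-/

def skipAfter (c d y : ℕ) : ℕ := if y ≤ c then y else y + d

theorem skipAfter_add_two {c y : ℕ} (hc : Even c) (hy : Even y) (d : ℕ) :
    skipAfter c d (y + 2) = skipAfter c d (y + 1) + 1 := by
  obtain ⟨m, rfl⟩ := hc
  obtain ⟨k, rfl⟩ := hy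
  unfold skipAfter
  split_ifs <;> omega

theorem stmt8_general (s : ℕ) (f : ℕ → ℕ)
    (hf : ∀ x, f x = if x ≤ 4 * s - 2 then x else x + 4)
    (a : ℕ → ℕ → ℕ)
    (ha14 : ∀ i j, 1 ≤ j → j ≤ 4 → a i j = f (4 * (i - 1) + j))
    (ha6 : ∀ i, a i 6 = a i 5 + 2) :
    ∀ i, 1 ≤ i → i ≤ 2 * s →
      a i 2 + a i 4 + a i 5 = a i 1 + a i 3 + a i 6 := by
  intro i _ _
  have hf : f = skipAfter (4 * s - 2) 4 := funext hf
  have hc : Even (4 * s - 2) := ⟨2 * s - 1, by omega⟩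
  have hrow : Even (4 * (i - 1)) := ⟨2 * (i - 1), by omega⟩
  have h2 : a i 2 = a i 1 + 1 := by
    rw [ha14 i 2 (by norm_num) (by norm_num), ha14 i 1 le_rfl (by norm_num), hf]
    exact skipAfter_add_two hc hrow 4
  have h4 : a i 4 = a i 3 + 1 := by
    rw [ha14 i 4 (by norm_num) le_rfl, ha14 i 3 (by norm_num) (by norm_num), hf]
    exact skipAfter_add_two hc (hrow.add even_two) 4
  rw [h2, h4, ha6 i]
  ring

/-- For `s ≥ 1`, the `2s × 6` array of Lemma 5.6 (columns 1–4 running through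
`{1,…,4s-2} ∪ {4s+3,…,8s+4}` in consecutive blocks of four, and columns 5–6 pairing up
`{8s+5,…,12s+4}` as described) satisfies the balance identity
`a_{i,2} + a_{i,4} + a_{i,5} = a_{i,1} + a_{i,3} + a_{i,6}` in every row. -/
theorem stmt8 (s : ℕ) (hs : 1 ≤ s) (f : ℕ → ℕ)
    (hf : ∀ x, f x = if x ≤ 4 * s - 2 then x else x + 4)
    (a : ℕ → ℕ → ℕ)
    (ha14 : ∀ i j, 1 ≤ j → j ≤ 4 → a i j = f (4 * (i - 1) + j))
    (ha5 : ∀ i, a i 5 = if i % 2 = 1 then 8 * s + 2 * i + 3 else 8 * s + 2 * i + 2)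
    (ha6 : ∀ i, a i 6 = a i 5 + 2) :
    ∀ i, 1 ≤ i → i ≤ 2 * s →
      a i 2 + a i 4 + a i 5 = a i 1 + a i 3 + a i 6 :=
  stmt8_general s f hf a ha14 ha6
end

section
/- Let s ≥ 1 and consider the 2s × 10 array whose i-th row is (4i−3, 4i−2, 4i−1, 4i, 8s+2i−1, 8s+2i+1, 12s+4i−1, 12s+4i, 12s+4i+1, 12s+4i+2). Then for each row i: a_{i,2} + a_{i,4} + a_{i,5} + a_{i,8} + a_{i,9} = a_{i,1} + a_{i,3} + a_{i,6} + a_{i,7} + a_{i,10}, the row is strictly increasing, and the array entries are exactly {1, ..., 8s} ∪ {8s+1, ..., 12s} ∪ {12s+3, ..., 20s+2}. -/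
/-!
The entries fall into three blocks of consecutive integers, each cut into runs of four:
columns 1–4 of row `k+1` are `4k+1, …, 4k+4`, columns 7–10 of row `k+1` are
`12s+4k+3, …, 12s+4k+6`, and columns 5–6 of the row pair `2k+1, 2k+2` together are
`8s+4k+1, …, 8s+4k+4`. The gap `12s+1, 12s+2` sits between the second and third block.
-/

theorem exists_eq_add_mul_add_of_mem_Ioc {c d m x : ℕ} (hx : x ∈ Set.Ioc c (c + d * m)) :
    ∃ k < m, ∃ r ∈ Set.Icc 1 d, x = c + d * k + r := by
  obtain ⟨hcx, hxm⟩ := hx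
  have hy : x - c - 1 < d * m := by omega
  have hd : 0 < d := Nat.pos_of_ne_zero (by rintro rfl; simp at hy)
  refine ⟨(x - c - 1) / d, Nat.div_lt_of_lt_mul hy, (x - c - 1) % d + 1,
    ⟨by omega, Nat.mod_lt _ hd⟩, ?_⟩
  have := Nat.div_add_mod (x - c - 1) d
  omega

/-- The array of Lemma 5.3, indexed from `1`; its rows are those with `1 ≤ i ≤ 2s`. -/
structure IsBlockArray (s : ℕ) (a : ℕ → ℕ → ℕ) : Prop where
  col1 : ∀ i, a i 1 = 4 * i - 3
  col2 : ∀ i, a i 2 = 4 * i - 2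
  col3 : ∀ i, a i 3 = 4 * i - 1
  col4 : ∀ i, a i 4 = 4 * i
  col5 : ∀ i, a i 5 = if i % 2 = 1 then 8 * s + 2 * i - 1 else 8 * s + 2 * i - 2
  col6 : ∀ i, a i 6 = a i 5 + 2
  col7 : ∀ i, a i 7 = 12 * s + 4 * i - 1
  col8 : ∀ i, a i 8 = 12 * s + 4 * i
  col9 : ∀ i, a i 9 = 12 * s + 4 * i + 1
  col10 : ∀ i, a i 10 = 12 * s + 4 * i + 2

namespace IsBlockArray

variable {s : ℕ} {a : ℕ → ℕ → ℕ}

theorem col5_cases (ha : IsBlockArray s a) (i : ℕ) :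
    i % 2 = 1 ∧ a i 5 = 8 * s + 2 * i - 1 ∨ i % 2 = 0 ∧ a i 5 = 8 * s + 2 * i - 2 := by
  rw [ha.col5]
  split <;> omega

theorem row_balance (ha : IsBlockArray s a) {i : ℕ} (hi : 1 ≤ i) :
    a i 2 + a i 4 + a i 5 + a i 8 + a i 9 = a i 1 + a i 3 + a i 6 + a i 7 + a i 10 := by
  rw [ha.col1, ha.col2, ha.col3, ha.col4, ha.col6, ha.col7, ha.col8, ha.col9, ha.col10]
  omega

theorem lt_succ_col (ha : IsBlockArray s a) {i j : ℕ} (hi : i ∈ Set.Icc 1 (2 * s))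
    (hj : j ∈ Set.Icc 1 9) : a i j < a i (j + 1) := by
  obtain ⟨hi1, hi2⟩ := hi
  obtain ⟨hj1, hj9⟩ := hj
  have hcol5 := ha.col5_cases i
  interval_cases j <;>
    simp only [Nat.reduceAdd, ha.col1, ha.col2, ha.col3, ha.col4, ha.col6, ha.col7, ha.col8,
      ha.col9, ha.col10] <;>
    omega

theorem strictMonoOn_row (ha : IsBlockArray s a) {i : ℕ} (hi : i ∈ Set.Icc 1 (2 * s)) :
    StrictMonoOn (a i) (Set.Icc 1 10) :=
  strictMonoOn_of_lt_succ Set.ordConnected_Icc fun j _ hj hj' => by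
    rw [Order.succ_eq_add_one] at hj' ⊢
    exact ha.lt_succ_col hi ⟨hj.1, by have := hj'.2; omega⟩

theorem entry_mem (ha : IsBlockArray s a) {i j : ℕ} (hi : i ∈ Set.Icc 1 (2 * s))
    (hj : j ∈ Set.Icc 1 10) :
    a i j ∈ Finset.Icc 1 (20 * s + 2) \ {12 * s + 1, 12 * s + 2} := by
  obtain ⟨hi1, hi2⟩ := hi
  obtain ⟨hj1, hj10⟩ := hj
  have hcol5 := ha.col5_cases i
  interval_cases j <;>
    simp only [Finset.mem_sdiff, Finset.mem_Icc, Finset.mem_insert, Finset.mem_singleton,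
      ha.col1, ha.col2, ha.col3, ha.col4, ha.col6, ha.col7, ha.col8, ha.col9, ha.col10] <;>
    omega

theorem exists_entry_eq (ha : IsBlockArray s a) {x : ℕ}
    (hx : x ∈ Finset.Icc 1 (20 * s + 2) \ {12 * s + 1, 12 * s + 2}) :
    ∃ i ∈ Set.Icc 1 (2 * s), ∃ j ∈ Set.Icc 1 10, a i j = x := by
  simp only [Finset.mem_sdiff, Finset.mem_Icc, Finset.mem_insert, Finset.mem_singleton] at hx
  by_cases hx8 : x ≤ 8 * s
  · obtain ⟨k, hk, r, ⟨hr1, hr4⟩, rfl⟩ :=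
      exists_eq_add_mul_add_of_mem_Ioc (x := x) (c := 0) (d := 4) (m := 2 * s)
        ⟨by omega, by omega⟩
    refine ⟨k + 1, ⟨by omega, by omega⟩, r, ⟨by omega, by omega⟩, ?_⟩
    interval_cases r <;> simp only [ha.col1, ha.col2, ha.col3, ha.col4] <;> omega
  by_cases hx12 : x ≤ 12 * s
  · obtain ⟨k, hk, r, ⟨hr1, hr4⟩, rfl⟩ :=
      exists_eq_add_mul_add_of_mem_Ioc (x := x) (c := 8 * s) (d := 4) (m := s)
        ⟨by omega, by omega⟩
    have hodd := ha.col5_cases (2 * k + 1)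
    have heven := ha.col5_cases (2 * k + 2)
    have hodd6 := ha.col6 (2 * k + 1)
    have heven6 := ha.col6 (2 * k + 2)
    interval_cases r
    · exact ⟨2 * k + 1, ⟨by omega, by omega⟩, 5, ⟨by omega, by omega⟩, by omega⟩
    · exact ⟨2 * k + 2, ⟨by omega, by omega⟩, 5, ⟨by omega, by omega⟩, by omega⟩
    · exact ⟨2 * k + 1, ⟨by omega, by omega⟩, 6, ⟨by omega, by omega⟩, by omega⟩
    · exact ⟨2 * k + 2, ⟨by omega, by omega⟩, 6, ⟨by omega, by omega⟩, by omega⟩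
  · obtain ⟨k, hk, r, ⟨hr1, hr4⟩, rfl⟩ :=
      exists_eq_add_mul_add_of_mem_Ioc (x := x) (c := 12 * s + 2) (d := 4) (m := 2 * s)
        ⟨by omega, by omega⟩
    refine ⟨k + 1, ⟨by omega, by omega⟩, r + 6, ⟨by omega, by omega⟩, ?_⟩
    interval_cases r <;> simp only [ha.col7, ha.col8, ha.col9, ha.col10] <;> omega

end IsBlockArray

theorem stmt15_general (s : ℕ) (a : ℕ → ℕ → ℕ)
    (h1 : ∀ i, a i 1 = 4 * i - 3) (h2 : ∀ i, a i 2 = 4 * i - 2)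
    (h3 : ∀ i, a i 3 = 4 * i - 1) (h4 : ∀ i, a i 4 = 4 * i)
    (h5 : ∀ i, a i 5 = if i % 2 = 1 then 8 * s + 2 * i - 1 else 8 * s + 2 * i - 2)
    (h6 : ∀ i, a i 6 = a i 5 + 2)
    (h7 : ∀ i, a i 7 = 12 * s + 4 * i - 1) (h8 : ∀ i, a i 8 = 12 * s + 4 * i)
    (h9 : ∀ i, a i 9 = 12 * s + 4 * i + 1) (h10 : ∀ i, a i 10 = 12 * s + 4 * i + 2) :
    (∀ i, 1 ≤ i → i ≤ 2 * s →
      (a i 2 + a i 4 + a i 5 + a i 8 + a i 9 =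
        a i 1 + a i 3 + a i 6 + a i 7 + a i 10) ∧
      (∀ j j', 1 ≤ j → j < j' → j' ≤ 10 → a i j < a i j')) ∧
    (Finset.Icc 1 (2 * s)).biUnion (fun i => (Finset.Icc 1 10).image (fun j => a i j)) =
      Finset.Icc 1 (20 * s + 2) \ {12 * s + 1, 12 * s + 2} := by
  have ha : IsBlockArray s a := ⟨h1, h2, h3, h4, h5, h6, h7, h8, h9, h10⟩
  refine ⟨fun i hi1 hi2 => ⟨ha.row_balance hi1, fun j j' hj hjj' hj' => ?_⟩, ?_⟩
  · exact ha.strictMonoOn_row ⟨hi1, hi2⟩ ⟨hj, by omega⟩ ⟨by omega, hj'⟩ hjj'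
  ext x
  simp only [Finset.mem_biUnion, Finset.mem_image, Finset.mem_Icc]
  constructor
  · rintro ⟨i, hi, j, hj, rfl⟩
    exact ha.entry_mem hi hj
  · exact ha.exists_entry_eq

/-- For `s ≥ 1`, the `2s × 10` array of Lemma 5.3 (row `i` given by
`(4i-3, 4i-2, 4i-1, 4i, *, *, 12s+4i-1, 12s+4i, 12s+4i+1, 12s+4i+2)` where columns 5–6
are `(8s+2i-1, 8s+2i+1)` for odd `i` and `(8s+2i-2, 8s+2i)` for even `i`) satisfies the
per-row balance identity, is strictly increasing along each row, and its entries are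
exactly `{1, …, 20s+2} \ {12s+1, 12s+2}`. -/
theorem stmt15 (s : ℕ) (hs : 1 ≤ s) (a : ℕ → ℕ → ℕ)
    (h1 : ∀ i, a i 1 = 4 * i - 3) (h2 : ∀ i, a i 2 = 4 * i - 2)
    (h3 : ∀ i, a i 3 = 4 * i - 1) (h4 : ∀ i, a i 4 = 4 * i)
    (h5 : ∀ i, a i 5 = if i % 2 = 1 then 8 * s + 2 * i - 1 else 8 * s + 2 * i - 2)
    (h6 : ∀ i, a i 6 = a i 5 + 2)
    (h7 : ∀ i, a i 7 = 12 * s + 4 * i - 1) (h8 : ∀ i, a i 8 = 12 * s + 4 * i)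
    (h9 : ∀ i, a i 9 = 12 * s + 4 * i + 1) (h10 : ∀ i, a i 10 = 12 * s + 4 * i + 2) :
    (∀ i, 1 ≤ i → i ≤ 2 * s →
      (a i 2 + a i 4 + a i 5 + a i 8 + a i 9 =
        a i 1 + a i 3 + a i 6 + a i 7 + a i 10) ∧
      (∀ j j', 1 ≤ j → j < j' → j' ≤ 10 → a i j < a i j')) ∧
    (Finset.Icc 1 (2 * s)).biUnion (fun i => (Finset.Icc 1 10).image (fun j => a i j)) =
      Finset.Icc 1 (20 * s + 2) \ {12 * s + 1, 12 * s + 2} :=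
  stmt15_general s a h1 h2 h3 h4 h5 h6 h7 h8 h9 h10
end

section
/- Let n = 2km with m ≡ 0 (mod 8) and k ≥ 2, and let (a_1 < a_2 < ... < a_m) be positive integers with Σ_{j ≡ 0,1 (mod 4)} a_j = Σ_{j ≡ 2,3 (mod 4)} a_j and a_m < n/2. Then the m-tuple (a_1, −a_3, a_5, −a_7, ..., a_{m−3}, −a_{m−1}, −a_{m−2}, a_{m−4}, −a_{m−6}, ..., −a_6, a_4, −a_2, a_m) has total sum 0 and all of its partial sums are pairwise distinct modulo n. -/
/-!
Write `P r` for the `r`-th partial sum and `M = m / 2`. For `r ≤ M`, `P r` is the alternating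
partial sum `a₁ - a₃ + a₅ - ⋯` of `r` terms; read backwards from the end,
`P (m - 1 - s) = P m - a_m + (a₂ - a₄ + ⋯)` with `s` terms in the bracket. Adding the two halves,
`P m` is the signed sum of the column-balance identity, so `P m = 0`.

Alternating partial sums of a positive increasing sequence zigzag outwards: those with an odd
number of terms increase and are positive, those with an even number decrease and are `≤ 0`.
Hence `P` is injective on each half, the first half lies in `[P M, P (M - 1)]` and the second half
strictly below `P M`. All partial sums lie in `[P (M + 1), P (M - 1)]`, an interval of length
`a_{m-1} + a_{m-2} < 2 a_m < n`, so distinct partial sums stay distinct modulo `n`.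
-/

open Finset

def altSum (b : ℕ → ℤ) (r : ℕ) : ℤ := ∑ j ∈ range r, (-1) ^ j * b j

@[simp] lemma altSum_zero (b : ℕ → ℤ) : altSum b 0 = 0 := rfl

lemma altSum_succ (b : ℕ → ℤ) (r : ℕ) : altSum b (r + 1) = altSum b r + (-1) ^ r * b r :=
  sum_range_succ _ _

section AlternatingSums

variable {b : ℕ → ℤ} {L : ℕ}

/-- `(-1) ^ r' * (altSum b r - altSum b r') = b (r' - 1) - b (r' - 2) + ⋯ ± b r`, an alternating
sum of an increasing sequence whose largest term is counted positively. -/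
theorem neg_one_pow_mul_altSum_sub_pos (hb0 : 0 < b 0) (hb : StrictMonoOn b (Set.Iio L))
    {r r' : ℕ} (hr : r < r') (hr' : r' ≤ L) : 0 < (-1) ^ r' * (altSum b r - altSum b r') := by
  induction r' using Nat.strong_induction_on generalizing r with
  | _ r' ih =>
  obtain _ | _ | n := r'
  · omega
  · obtain rfl : r = 0 := by omega
    simpa [altSum_succ] using hb0
  have hσ : ((-1 : ℤ) ^ n) ^ 2 = 1 := by rw [← pow_mul, pow_mul', neg_one_sq, one_pow]
  have hpos : 0 < b (n + 1) :=
    hb0.trans_le <| hb.monotoneOn (by simp; omega) (by simp; omega) (by omega)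
  rcases Nat.lt_succ_iff_lt_or_eq.1 hr with hr | rfl
  · have hstep : b n < b (n + 1) := hb (by simp; omega) (by simp; omega) (by omega)
    have hn : 0 ≤ (-1) ^ n * (altSum b r - altSum b n) := by
      rcases Nat.lt_succ_iff_lt_or_eq.1 hr with hr | rfl
      · exact (ih n (by omega) hr (by omega)).le
      · simp
    have key : (-1) ^ (n + 2) * (altSum b r - altSum b (n + 2))
        = (-1) ^ n * (altSum b r - altSum b n) + (b (n + 1) - b n) := by
      rw [altSum_succ, altSum_succ]
      linear_combination (b (n + 1) - b n) * hσ
    linarith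
  · have key : (-1) ^ (n + 2) * (altSum b (n + 1) - altSum b (n + 2)) = b (n + 1) := by
      rw [altSum_succ b (n + 1)]
      linear_combination b (n + 1) * hσ
    exact key ▸ hpos

theorem altSum_lt_of_odd (hb0 : 0 < b 0) (hb : StrictMonoOn b (Set.Iio L)) {r N : ℕ}
    (hN : Odd N) (hr : r < N) (hNL : N ≤ L) : altSum b r < altSum b N := by
  have := neg_one_pow_mul_altSum_sub_pos hb0 hb hr hNL
  rw [hN.neg_one_pow] at this
  linarith

theorem altSum_lt_of_even (hb0 : 0 < b 0) (hb : StrictMonoOn b (Set.Iio L)) {r N : ℕ}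
    (hN : Even N) (hr : r < N) (hNL : N ≤ L) : altSum b N < altSum b r := by
  have := neg_one_pow_mul_altSum_sub_pos hb0 hb hr hNL
  rw [hN.neg_one_pow] at this
  linarith

theorem altSum_ne (hb0 : 0 < b 0) (hb : StrictMonoOn b (Set.Iio L)) {r r' : ℕ}
    (hr : r < r') (hr' : r' ≤ L) : altSum b r ≠ altSum b r' := fun h => by
  simpa [h] using neg_one_pow_mul_altSum_sub_pos hb0 hb hr hr'

theorem altSum_le_of_odd (hb0 : 0 < b 0) (hb : StrictMonoOn b (Set.Iio L)) {r N : ℕ}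
    (hN : Odd N) (hr : r ≤ N) (hNL : N ≤ L) : altSum b r ≤ altSum b N := by
  rcases hr.lt_or_eq with hr | rfl
  · exact (altSum_lt_of_odd hb0 hb hN hr hNL).le
  · exact le_rfl

theorem altSum_le_of_even (hb0 : 0 < b 0) (hb : StrictMonoOn b (Set.Iio L)) {r N : ℕ}
    (hN : Even N) (hr : r ≤ N) (hNL : N ≤ L) : altSum b N ≤ altSum b r := by
  rcases hr.lt_or_eq with hr | rfl
  · exact (altSum_lt_of_even hb0 hb hN hr hNL).le
  · exact le_rfl

end AlternatingSums

theorem eq_of_modEq_of_mem_Icc {n lo hi x y : ℤ} (h : x ≡ y [ZMOD n])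
    (hx : x ∈ Set.Icc lo hi) (hy : y ∈ Set.Icc lo hi) (hlen : hi - lo < n) : x = y := by
  have := Int.eq_zero_of_abs_lt_dvd h.dvd <|
    abs_sub_lt_iff.2 ⟨by linarith [hx.1, hy.2], by linarith [hx.2, hy.1]⟩
  linarith

section Zigzag

variable {P bO bE : ℕ → ℤ} {M : ℕ} {c : ℤ}

theorem zigzag_junction (hPA : ∀ r ≤ M, P r = altSum bO r)
    (hPB : ∀ r, M ≤ r → r < 2 * M → P r = altSum bE (2 * M - 1 - r) - c) (hM : 0 < M) :
    altSum bO M = altSum bE (M - 1) - c := by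
  rw [← hPA M le_rfl, hPB M le_rfl (by omega), show 2 * M - 1 - M = M - 1 by omega]

theorem zigzag_injOn (hM : Even M) (hO0 : 0 < bO 0) (hO : StrictMonoOn bO (Set.Iio M))
    (hE0 : 0 < bE 0) (hE : StrictMonoOn bE (Set.Iio M))
    (hPA : ∀ r ≤ M, P r = altSum bO r)
    (hPB : ∀ r, M ≤ r → r < 2 * M → P r = altSum bE (2 * M - 1 - r) - c) :
    Set.InjOn P (Set.Iio (2 * M)) := by
  suffices h : ∀ r r', r < r' → r' < 2 * M → P r ≠ P r' by
    intro r hr r' hr' hrr'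
    by_contra hne
    rcases Nat.lt_or_gt_of_ne hne with hlt | hlt
    · exact h r r' hlt hr' hrr'
    · exact h r' r hlt hr hrr'.symm
  intro r r' hrr' hr'
  rcases le_or_gt r' M with hr'M | hr'M
  · rw [hPA r (by omega), hPA r' hr'M]
    exact altSum_ne hO0 hO hrr' hr'M
  rcases le_or_gt r M with hrM | hrM
  · have hPM := zigzag_junction hPA hPB (by omega)
    have h1 := altSum_le_of_even hO0 hO hM hrM le_rfl
    have h2 := altSum_lt_of_odd hE0 hE (Nat.Even.sub_odd (by omega) hM odd_one)
      (show 2 * M - 1 - r' < M - 1 by omega) (by omega)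
    rw [hPA r hrM, hPB r' (by omega) hr']
    exact ne_of_gt (by linarith)
  · rw [hPB r (by omega) (by omega), hPB r' (by omega) hr']
    exact fun h => altSum_ne hE0 hE (show 2 * M - 1 - r' < 2 * M - 1 - r by omega) (by omega)
      (by linarith)

theorem zigzag_mem_Icc (hM : Even M) (hO0 : 0 < bO 0) (hO : StrictMonoOn bO (Set.Iio M))
    (hE0 : 0 < bE 0) (hE : StrictMonoOn bE (Set.Iio M))
    (hPA : ∀ r ≤ M, P r = altSum bO r)
    (hPB : ∀ r, M ≤ r → r < 2 * M → P r = altSum bE (2 * M - 1 - r) - c)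
    {r : ℕ} (hr : r < 2 * M) : P r ∈ Set.Icc (P (M + 1)) (P (M - 1)) := by
  have hM2 : 2 ≤ M := by
    obtain ⟨t, rfl⟩ := hM
    omega
  have hM1 : Odd (M - 1) := Nat.Even.sub_odd (by omega) hM odd_one
  have hPM := zigzag_junction hPA hPB (by omega)
  have hOtop := altSum_le_of_even hO0 hO hM (Nat.sub_le M 1) le_rfl
  have hEbot := altSum_le_of_odd hE0 hE hM1 (show M - 2 ≤ M - 1 by omega) (by omega)
  rw [hPA (M - 1) (by omega), hPB (M + 1) (by omega) (by omega),
    show 2 * M - 1 - (M + 1) = M - 2 by omega]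
  rcases le_or_gt r M with hrM | hrM
  · rw [hPA r hrM]
    have hlo := altSum_le_of_even hO0 hO hM hrM le_rfl
    refine ⟨by linarith, ?_⟩
    rcases hrM.lt_or_eq with hrM | rfl
    · exact altSum_le_of_odd hO0 hO hM1 (by omega) (by omega)
    · exact hOtop
  · rw [hPB r hrM.le hr]
    have hlo := altSum_le_of_even hE0 hE (hM.tsub even_two) (show 2 * M - 1 - r ≤ M - 2 by omega)
      (by omega)
    have hhi := altSum_lt_of_odd hE0 hE hM1 (show 2 * M - 1 - r < M - 1 by omega) (by omega)
    exact ⟨by linarith, by linarith⟩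

theorem zigzag_not_modEq (hM : Even M) (hO0 : 0 < bO 0) (hO : StrictMonoOn bO (Set.Iio M))
    (hE0 : 0 < bE 0) (hE : StrictMonoOn bE (Set.Iio M))
    (hPA : ∀ r ≤ M, P r = altSum bO r)
    (hPB : ∀ r, M ≤ r → r < 2 * M → P r = altSum bE (2 * M - 1 - r) - c)
    (hP2M : P (2 * M) = 0) {n : ℤ} (hn : bO (M - 1) + bE (M - 2) < n)
    {r r' : ℕ} (hr : 1 ≤ r) (hrr' : r < r') (hr' : r' ≤ 2 * M) : ¬ P r ≡ P r' [ZMOD n] := by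
  intro hmod
  have hM2 : 2 ≤ M := by
    obtain ⟨t, rfl⟩ := hM
    omega
  have hwidth : P (M - 1) - P (M + 1) = bO (M - 1) + bE (M - 2) := by
    have hO1 := altSum_succ bO (M - 1)
    have hE1 := altSum_succ bE (M - 2)
    rw [Nat.sub_add_cancel (by omega), (Nat.Even.sub_odd (by omega) hM odd_one).neg_one_pow]
      at hO1
    rw [show M - 2 + 1 = M - 1 by omega, (hM.tsub even_two).neg_one_pow] at hE1
    rw [hPA (M - 1) (by omega), hPB (M + 1) (by omega) (by omega),
      show 2 * M - 1 - (M + 1) = M - 2 by omega]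
    linarith [zigzag_junction hPA hPB (by omega)]
  -- `P (2 * M) = P 0`, so the last partial sum may be replaced by the empty one
  obtain ⟨t, ht, hPt, htr⟩ : ∃ t < 2 * M, P t = P r' ∧ t ≠ r := by
    rcases hr'.lt_or_eq with hr' | rfl
    · exact ⟨r', hr', rfl, by omega⟩
    · exact ⟨0, by omega, by rw [hP2M, hPA 0 (Nat.zero_le M), altSum_zero], by omega⟩
  have hrt : P r = P t := eq_of_modEq_of_mem_Icc (hmod.trans (hPt ▸ Int.ModEq.refl _))
    (zigzag_mem_Icc hM hO0 hO hE0 hE hPA hPB (by omega))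
    (zigzag_mem_Icc hM hO0 hO hE0 hE hPA hPB ht) (by linarith)
  exact htr (zigzag_injOn hM hO0 hO hE0 hE hPA hPB (by simp; omega) ht hrt).symm

end Zigzag

theorem sum_Icc_one_two_mul {β : Type*} [AddCommMonoid β] (f : ℕ → β) (N : ℕ) :
    ∑ j ∈ Icc 1 (2 * N), f j = ∑ j ∈ range N, (f (2 * j + 1) + f (2 * j + 2)) := by
  induction N with
  | zero => simp
  | succ N ih =>
    rw [show 2 * (N + 1) = 2 * N + 1 + 1 by ring, sum_Icc_succ_top (by omega),
      sum_Icc_succ_top (by omega), ih, sum_range_succ, add_assoc]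

theorem sum_neg_one_pow_div_two_mul_eq_zero {a : ℕ → ℕ} {m : ℕ}
    (hbal : ∑ j ∈ (Icc 1 m).filter (fun j => j % 4 = 0 ∨ j % 4 = 1), a j =
      ∑ j ∈ (Icc 1 m).filter (fun j => j % 4 = 2 ∨ j % 4 = 3), a j) :
    ∑ j ∈ Icc 1 m, (-1 : ℤ) ^ (j / 2) * a j = 0 := by
  have hcompl : (Icc 1 m).filter (fun j => ¬(j % 4 = 0 ∨ j % 4 = 1)) =
      (Icc 1 m).filter (fun j => j % 4 = 2 ∨ j % 4 = 3) :=
    filter_congr fun j _ => by omega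
  rw [← sum_filter_add_sum_filter_not _ (fun j => j % 4 = 0 ∨ j % 4 = 1), hcompl]
  have hplus : ∀ j ∈ (Icc 1 m).filter (fun j => j % 4 = 0 ∨ j % 4 = 1),
      (-1 : ℤ) ^ (j / 2) * a j = a j := fun j hj => by
    rw [Even.neg_one_pow (Nat.even_iff.2 (by simp at hj; omega)), one_mul]
  have hminus : ∀ j ∈ (Icc 1 m).filter (fun j => j % 4 = 2 ∨ j % 4 = 3),
      (-1 : ℤ) ^ (j / 2) * a j = -a j := fun j hj => by
    rw [Odd.neg_one_pow (Nat.odd_iff.2 (by simp at hj; omega)), neg_one_mul]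
  rw [sum_congr rfl hplus, sum_congr rfl hminus, sum_neg_distrib, ← sub_eq_add_neg, sub_eq_zero]
  exact_mod_cast hbal

section Halves

variable {d a : ℕ → ℤ} {M : ℕ}

theorem sum_Icc_eq_altSum
    (hd : ∀ i, 1 ≤ i → i ≤ M → d i = (-1) ^ (i + 1) * a (2 * i - 1)) {r : ℕ} (hr : r ≤ M) :
    ∑ i ∈ Icc 1 r, d i = altSum (fun j => a (2 * j + 1)) r := by
  induction r with
  | zero => rfl
  | succ r ih =>
    rw [sum_Icc_succ_top (by omega), ih (by omega), altSum_succ, hd _ (by omega) hr,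
      show 2 * (r + 1) - 1 = 2 * r + 1 by omega]
    ring

theorem sum_Icc_sub_eq_altSum (hM : Even M)
    (hd : ∀ i, M < i → i < 2 * M → d i = (-1) ^ (i - M) * a (2 * M - 2 * (i - M)))
    (hdm : d (2 * M) = a (2 * M)) {s : ℕ} (hs : s < M) :
    ∑ i ∈ Icc 1 (2 * M - 1 - s), d i
      = ∑ i ∈ Icc 1 (2 * M), d i - a (2 * M) + altSum (fun j => a (2 * j + 2)) s := by
  induction s with
  | zero =>
    have h := sum_Icc_succ_top (show 1 ≤ 2 * M - 1 + 1 by omega) d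
    rw [Nat.sub_add_cancel (by omega), hdm] at h
    rw [h]
    simp
  | succ s ih =>
    have h := sum_Icc_succ_top (show 1 ≤ 2 * M - 1 - (s + 1) + 1 by omega) d
    rw [show 2 * M - 1 - (s + 1) + 1 = 2 * M - 1 - s by omega, ih (by omega),
      hd _ (by omega) (by omega), show 2 * M - 2 * (2 * M - 1 - s - M) = 2 * s + 2 by omega,
      neg_one_pow_congr (n := s + 1) (by simp only [Nat.even_iff] at hM ⊢; omega)] at h
    rw [altSum_succ]
    linear_combination -h

theorem sum_Icc_eq_zero (hM : Even M) (hM0 : 0 < M)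
    (hd1 : ∀ i, 1 ≤ i → i ≤ M → d i = (-1) ^ (i + 1) * a (2 * i - 1))
    (hd2 : ∀ i, M < i → i < 2 * M → d i = (-1) ^ (i - M) * a (2 * M - 2 * (i - M)))
    (hdm : d (2 * M) = a (2 * M))
    (hbal : ∑ j ∈ Icc 1 (2 * M), (-1) ^ (j / 2) * a j = 0) :
    ∑ i ∈ Icc 1 (2 * M), d i = 0 := by
  have hfirst := sum_Icc_eq_altSum hd1 le_rfl
  have hsecond := sum_Icc_sub_eq_altSum hM hd2 hdm (show M - 1 < M by omega)
  rw [show 2 * M - 1 - (M - 1) = M by omega] at hsecond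
  have hlast := altSum_succ (fun j => a (2 * j + 2)) (M - 1)
  rw [Nat.sub_add_cancel hM0, (Nat.Even.sub_odd hM0 hM odd_one).neg_one_pow,
    show 2 * (M - 1) + 2 = 2 * M by omega] at hlast
  have hpairs : altSum (fun j => a (2 * j + 1)) M - altSum (fun j => a (2 * j + 2)) M = 0 := by
    rw [← hbal, sum_Icc_one_two_mul, altSum, altSum, ← sum_sub_distrib]
    refine sum_congr rfl fun j _ => ?_
    rw [show (2 * j + 1) / 2 = j by omega, show (2 * j + 2) / 2 = j + 1 by omega, pow_succ]
    ring
  linarith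

end Halves

theorem stmt16_general (m n : ℕ) (hm : 0 < m) (h8 : m % 8 = 0) (a : ℕ → ℕ)
    (hpos : ∀ i, 1 ≤ i → i ≤ m → 0 < a i)
    (hmono : ∀ i j, 1 ≤ i → i < j → j ≤ m → a i < a j)
    (hlt : a m < n / 2)
    (hbal : ∑ j ∈ (Finset.Icc 1 m).filter (fun j => j % 4 = 0 ∨ j % 4 = 1), a j =
      ∑ j ∈ (Finset.Icc 1 m).filter (fun j => j % 4 = 2 ∨ j % 4 = 3), a j)
    (d : ℕ → ℤ)
    (hd1 : ∀ i, 1 ≤ i → i ≤ m / 2 → d i = (-1) ^ (i + 1) * (a (2 * i - 1) : ℤ))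
    (hd2 : ∀ i, m / 2 < i → i < m →
      d i = (-1) ^ (i - m / 2) * (a (m - 2 * (i - m / 2)) : ℤ))
    (hdm : d m = (a m : ℤ)) :
    (∑ i ∈ Finset.Icc 1 m, d i = 0) ∧
    (∀ r s, 1 ≤ r → r < s → s ≤ m →
      ¬ Int.ModEq (n : ℤ) (∑ i ∈ Finset.Icc 1 r, d i) (∑ i ∈ Finset.Icc 1 s, d i)) := by
  obtain ⟨M, rfl, hM⟩ : ∃ M, m = 2 * M ∧ Even M := ⟨m / 2, by omega, m / 4, by omega⟩
  rw [Nat.mul_div_cancel_left M two_pos] at hd1 hd2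
  have hmonoInt : ∀ i j, 1 ≤ i → i < j → j ≤ 2 * M → (a i : ℤ) < a j := by exact_mod_cast hmono
  have hO : StrictMonoOn (fun j => (a (2 * j + 1) : ℤ)) (Set.Iio M) := fun i _ j hj hij =>
    hmonoInt _ _ (by omega) (by omega) (by rw [Set.mem_Iio] at hj; omega)
  have hE : StrictMonoOn (fun j => (a (2 * j + 2) : ℤ)) (Set.Iio M) := fun i _ j hj hij =>
    hmonoInt _ _ (by omega) (by omega) (by rw [Set.mem_Iio] at hj; omega)
  have htotal := sum_Icc_eq_zero (a := fun j => (a j : ℤ)) hM (by omega) hd1 hd2 hdm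
    (sum_neg_one_pow_div_two_mul_eq_zero hbal)
  have hPB : ∀ r, M ≤ r → r < 2 * M → ∑ i ∈ Icc 1 r, d i
      = altSum (fun j => (a (2 * j + 2) : ℤ)) (2 * M - 1 - r) - a (2 * M) := fun r hr hr' => by
    have := sum_Icc_sub_eq_altSum (a := fun j => (a j : ℤ)) hM hd2 hdm
      (show 2 * M - 1 - r < M by omega)
    rw [show 2 * M - 1 - (2 * M - 1 - r) = r by omega, htotal] at this
    linarith
  have hwidth : (a (2 * (M - 1) + 1) : ℤ) + a (2 * (M - 2) + 2) < n := by
    have h1 := hmono (2 * (M - 2) + 2) (2 * (M - 1) + 1) (by omega) (by omega) (by omega)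
    have h2 := hmono (2 * (M - 1) + 1) (2 * M) (by omega) (by omega) (by omega)
    omega
  refine ⟨htotal, fun r s hr hrs hs => zigzag_not_modEq (P := fun r => ∑ i ∈ Icc 1 r, d i) hM
    (by exact_mod_cast hpos 1 le_rfl (by omega)) hO
    (by exact_mod_cast hpos 2 (by norm_num) (by omega)) hE
    (fun r => sum_Icc_eq_altSum (a := fun j => (a j : ℤ)) hd1) hPB htotal hwidth hr hrs hs⟩

/-- Let `n = 2km` with `m ≡ 0 (mod 8)` and `k ≥ 2`, and let `a_1 < a_2 < … < a_m` be
positive integers with `a_m < n/2` satisfying the column-balance identity. Then the signed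
`m`-tuple `(a_1, -a_3, a_5, …, -a_{m-1}, -a_{m-2}, a_{m-4}, …, a_4, -a_2, a_m)` has total
sum `0` and all of its partial sums are pairwise distinct modulo `n`. -/
theorem stmt16 (m k n : ℕ) (hm : 0 < m) (h8 : m % 8 = 0) (hk : 2 ≤ k)
    (hn : n = 2 * k * m) (a : ℕ → ℕ)
    (hpos : ∀ i, 1 ≤ i → i ≤ m → 0 < a i)
    (hmono : ∀ i j, 1 ≤ i → i < j → j ≤ m → a i < a j)
    (hlt : a m < n / 2)
    (hbal : ∑ j ∈ (Finset.Icc 1 m).filter (fun j => j % 4 = 0 ∨ j % 4 = 1), a j =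
      ∑ j ∈ (Finset.Icc 1 m).filter (fun j => j % 4 = 2 ∨ j % 4 = 3), a j)
    (d : ℕ → ℤ)
    (hd1 : ∀ i, 1 ≤ i → i ≤ m / 2 → d i = (-1) ^ (i + 1) * (a (2 * i - 1) : ℤ))
    (hd2 : ∀ i, m / 2 < i → i < m →
      d i = (-1) ^ (i - m / 2) * (a (m - 2 * (i - m / 2)) : ℤ))
    (hdm : d m = (a m : ℤ)) :
    (∑ i ∈ Finset.Icc 1 m, d i = 0) ∧
    (∀ r s, 1 ≤ r → r < s → s ≤ m →
      ¬ Int.ModEq (n : ℤ) (∑ i ∈ Finset.Icc 1 r, d i) (∑ i ∈ Finset.Icc 1 s, d i)) :=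
  stmt16_general m n hm h8 a hpos hmono hlt hbal d hd1 hd2 hdm
end

section
/- Let t be odd, m even, n = mt, and let C be an m-cycle in a cyclic m-cycle system of a graph on vertex set Z_n lying in an orbit of odd length k = ℓt. If ℓ(C) contains an odd number of odd edge lengths, then t is odd; dually, if the orbit length k is even then ℓ(C) contains an even number of odd edge lengths. -/
lemma Int.even_sum_iff_even_sum_natAbs {ι : Type*} (s : Finset ι) (d : ι → ℤ) :
    Even (∑ i ∈ s, d i) ↔ Even (∑ i ∈ s, (d i).natAbs) := by
  induction s using Finset.cons_induction with
  | empty => simp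
  | cons a s ha ih =>
    simp only [Finset.sum_cons, Int.even_add, Nat.even_add, ih, Int.natAbs_even]

lemma Int.even_sum_iff_even_card_odd_natAbs {ι : Type*} (s : Finset ι) (d : ι → ℤ) :
    Even (∑ i ∈ s, d i) ↔ Even (s.filter fun i => Odd (d i).natAbs).card := by
  rw [Int.even_sum_iff_even_sum_natAbs, Finset.even_sum_iff_even_card_odd]

theorem stmt17_general (t l k x : ℕ) (d : ℕ → ℤ)
    (hk : k = l * t)
    (hend : ∑ i ∈ Finset.range l, d i = (k : ℤ) * (x : ℤ)) :
    (Odd (((Finset.range l).filter (fun i => Odd (d i).natAbs)).card) → Odd t) ∧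
    (Even k → Even (((Finset.range l).filter (fun i => Odd (d i).natAbs)).card)) := by
  have even_card_of_even_k :
      Even k → Even (((Finset.range l).filter (fun i => Odd (d i).natAbs)).card) := by
    intro hke
    rw [← Int.even_sum_iff_even_card_odd_natAbs, hend]
    exact ((Int.even_coe_nat k).mpr hke).mul_right _
  refine ⟨fun hodd => Nat.not_even_iff_odd.mp fun hte => ?_, even_card_of_even_k⟩
  exact Nat.not_even_iff_odd.mpr hodd (even_card_of_even_k (hk ▸ hte.mul_left l))

/-- The parity argument of Lemma 2.2: let `m` be even, `n = mt`, and let `C` be a cycle of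
a cyclic cycle system in an orbit of length `k = ℓt`, represented by the signed edge
differences `d` along the subpath of length `ℓ = |ℓ(C)|` starting at `0`, which ends at
`kx` with `gcd(x, n/k) = 1` and whose edge lengths are pairwise distinct. If `ℓ(C)`
contains an odd number of odd edge lengths then `t` is odd; dually, if `k` is even then
`ℓ(C)` contains an even number of odd edge lengths. -/
theorem stmt17 (m t l k n x : ℕ) (d : ℕ → ℤ)
    (hm : Even m) (hn : n = m * t) (hk : k = l * t) (hl : 0 < l) (ht : 0 < t)
    (hx : Nat.gcd x (n / k) = 1)
    (hend : ∑ i ∈ Finset.range l, d i = (k : ℤ) * (x : ℤ))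
    (hdist : ∀ i j, i < j → j < l → (d i).natAbs ≠ (d j).natAbs)
    (hpos : ∀ i, i < l → 0 < (d i).natAbs) :
    (Odd (((Finset.range l).filter (fun i => Odd (d i).natAbs)).card) → Odd t) ∧
    (Even k → Even (((Finset.range l).filter (fun i => Odd (d i).natAbs)).card)) :=
  stmt17_general t l k x d hk hend
end

section
/- Let r ≥ 1 and let the eight paths in Z_{16r} given by P_i: 0, 9+8i, 4 and P_i': 0, 11+8i, 4 for 0 ≤ i ≤ r−2, together with P'': 0, 8r−3, −4, be given. For each such path Q of length 2 ending at ±4, the union Q ∪ ρ^4(Q) ∪ ρ^8(Q) ∪ ... ∪ ρ^{16r−4}(Q) is a single cycle of length 8r in Z_{16r}, where ρ is translation by 1. -/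
/-!
The walk alternates between the points `t·d` and `t·d + v` (`t = 0, 1, 2, …`), where `d = ±4`
and `v` is odd. Since the modulus `16r` is even, two vertices of different parity classes never
coincide; two vertices of the same class differ by `(t - t')·d`, which is divisible by
`16r = 4r·|d|` only when `4r ∣ t - t'`, i.e. `t = t'` for `t, t' < 4r`.
-/

/-- The `j`-th vertex of the walk `Q, ρ^d(Q), ρ^{2d}(Q), …` for the path `Q : 0, v, d`. -/
def translatedPathVertex (d v : ℤ) (j : ℕ) : ℤ :=
  if j % 2 = 0 then ((j / 2 : ℕ) : ℤ) * d else ((j / 2 : ℕ) : ℤ) * d + v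

lemma translatedPathVertex_eq (d v : ℤ) (j : ℕ) :
    translatedPathVertex d v j = ((j / 2 : ℕ) : ℤ) * d + ((j % 2 : ℕ) : ℤ) * v := by
  unfold translatedPathVertex
  split_ifs with h
  · simp [h]
  · simp [Nat.mod_two_ne_zero.mp h]

lemma Nat.eq_of_mul_dvd_sub_mul {N a b : ℕ} {d : ℤ} (hd : d ≠ 0) (ha : a < N) (hb : b < N)
    (h : (N : ℤ) * d ∣ ((a : ℤ) - b) * d) : a = b := by
  have hN : (N : ℤ) ∣ (a : ℤ) - b := (mul_dvd_mul_iff_right hd).mp h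
  have habs : |(a : ℤ) - b| < N := abs_lt.mpr ⟨by omega, by omega⟩
  have := Int.eq_zero_of_abs_lt_dvd hN habs
  omega

lemma translatedPathVertex_injective {L N m : ℕ} {d v : ℤ} (hL : L ≤ 2 * N) (hm : (N : ℤ) * d ∣ m)
    (hd0 : d ≠ 0) (hd : 2 ∣ d) (hv : ¬ 2 ∣ v) :
    Function.Injective (fun j : Fin L => (translatedPathVertex d v j : ZMod m)) := by
  intro j k hjk
  have hdiff : (N : ℤ) * d ∣ translatedPathVertex d v k - translatedPathVertex d v j :=
    hm.trans ((ZMod.intCast_eq_intCast_iff_dvd_sub _ _ _).mp hjk)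
  rw [translatedPathVertex_eq, translatedPathVertex_eq] at hdiff
  have hsplit : ((k / 2 : ℕ) : ℤ) * d + ((k % 2 : ℕ) : ℤ) * v - (((j / 2 : ℕ) : ℤ) * d
      + ((j % 2 : ℕ) : ℤ) * v) = (((k / 2 : ℕ) : ℤ) - (j / 2 : ℕ)) * d
      + (((k % 2 : ℕ) : ℤ) - (j % 2 : ℕ)) * v := by ring
  rw [hsplit] at hdiff
  have hparity : (k : ℕ) % 2 = (j : ℕ) % 2 := by
    have h2 : (2 : ℤ) ∣ (((k % 2 : ℕ) : ℤ) - (j % 2 : ℕ)) * v :=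
      (dvd_add_right (dvd_mul_of_dvd_right hd _)).mp ((dvd_mul_of_dvd_right hd _).trans hdiff)
    have := (Int.prime_two.dvd_mul.mp h2).resolve_right hv
    omega
  rw [hparity, sub_self, zero_mul, add_zero] at hdiff
  have hhalf := Nat.eq_of_mul_dvd_sub_mul hd0 (by omega) (by omega) hdiff
  exact Fin.ext (by omega)

theorem stmt18_general (r : ℕ) (v1 v2 : ℤ)
    (hQ : (∃ i : ℕ, i + 2 ≤ r ∧ v1 = 9 + 8 * i ∧ v2 = 4) ∨
          (∃ i : ℕ, i + 2 ≤ r ∧ v1 = 11 + 8 * i ∧ v2 = 4) ∨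
          (v1 = 8 * (r : ℤ) - 3 ∧ v2 = -4)) :
    Function.Injective (fun j : Fin (8 * r) =>
      (((if (j : ℕ) % 2 = 0 then (((j : ℕ) / 2 : ℕ) : ℤ) * v2
         else (((j : ℕ) / 2 : ℕ) : ℤ) * v2 + v1) : ℤ) : ZMod (16 * r))) ∧
    (((4 * (r : ℤ) * v2 : ℤ) : ZMod (16 * r)) = 0) := by
  have hv1 : ¬ 2 ∣ v1 := by
    rcases hQ with ⟨i, -, rfl, -⟩ | ⟨i, -, rfl, -⟩ | ⟨rfl, -⟩ <;> omega
  have hv2 : v2 = 4 ∨ v2 = -4 := by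
    rcases hQ with ⟨-, -, -, h⟩ | ⟨-, -, -, h⟩ | ⟨-, h⟩ <;> simp [h]
  have hdvd : (4 * r : ℕ) * v2 ∣ ((16 * r : ℕ) : ℤ) ∧ ((16 * r : ℕ) : ℤ) ∣ 4 * r * v2 := by
    rcases hv2 with rfl | rfl
    · exact ⟨⟨1, by push_cast; ring⟩, ⟨1, by push_cast; ring⟩⟩
    · exact ⟨⟨-1, by push_cast; ring⟩, ⟨-1, by push_cast; ring⟩⟩
  refine ⟨translatedPathVertex_injective (by omega) hdvd.1 ?_ ?_ hv1,
    (ZMod.intCast_zmod_eq_zero_iff_dvd _ _).mpr hdvd.2⟩ <;>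
    rcases hv2 with rfl | rfl <;> norm_num

/-- Let `r ≥ 1`. For each of the paths `P_i : 0, 9+8i, 4` and `P_i' : 0, 11+8i, 4`
(`0 ≤ i ≤ r-2`) and `P'' : 0, 8r-3, -4` in `Z_{16r}`, the union
`Q ∪ ρ⁴(Q) ∪ ρ⁸(Q) ∪ … ∪ ρ^{16r-4}(Q)` is a single cycle of length `8r`: its `8r`
vertices `(j/2)·v₂` (`j` even) and `(j/2)·v₂ + v₁` (`j` odd) are pairwise distinct in
`Z_{16r}`, and the walk closes up since `4r·v₂ = 0` in `Z_{16r}`. -/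
theorem stmt18 (r : ℕ) (hr : 1 ≤ r) (v1 v2 : ℤ)
    (hQ : (∃ i : ℕ, i + 2 ≤ r ∧ v1 = 9 + 8 * i ∧ v2 = 4) ∨
          (∃ i : ℕ, i + 2 ≤ r ∧ v1 = 11 + 8 * i ∧ v2 = 4) ∨
          (v1 = 8 * (r : ℤ) - 3 ∧ v2 = -4)) :
    Function.Injective (fun j : Fin (8 * r) =>
      (((if (j : ℕ) % 2 = 0 then (((j : ℕ) / 2 : ℕ) : ℤ) * v2
         else (((j : ℕ) / 2 : ℕ) : ℤ) * v2 + v1) : ℤ) : ZMod (16 * r))) ∧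
    (((4 * (r : ℤ) * v2 : ℤ) : ZMod (16 * r)) = 0) :=
  stmt18_general r v1 v2 hQ
end
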